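/- For every θ with 1/2 < θ < 1, the function h₂(j) = jθ^{j+2} − (j+1)θ^{j+1} − (j−1)θ^{j} + jθ^{j−1} + θ − 1 has exactly one positive real root j₂(θ), and h₂(j) > 0 for all 0 < j < j₂(θ). -/

import Mathlib

/-!
Factoring out `θ ^ j` gives `h₂(j) = (1 - θ) (θ ^ j (1 + p j) - 1)` with `p = (1 - θ²) / θ`.
The function `θ ^ j (1 + p j)` takes the value `1` at `0`, has derivative
`θ ^ j (p + log θ (1 + p j))`, so it increases up to a single critical point and then decreases
to `0`. The critical point is positive because `log θ ≥ 1 - θ⁻¹` gives `p + log θ ≥ 1 - θ > 0`,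
so the function comes back to the value `1` exactly once.
-/

open Real

/-- `h₂(j) = jθ^{j+2} − (j+1)θ^{j+1} − (j−1)θ^{j} + jθ^{j−1} + θ − 1`, real exponents. -/
noncomputable def h2 (θ j : ℝ) : ℝ :=
  j * θ ^ (j + 2) - (j + 1) * θ ^ (j + 1) - (j - 1) * θ ^ j + j * θ ^ (j - 1) + θ - 1

open Filter Topology Set

theorem exists_unique_pos_eq_of_strictMonoOn_of_strictAntiOn {F : ℝ → ℝ} {m l : ℝ} (hm : 0 < m)
    (hmono : StrictMonoOn F (Icc 0 m)) (hanti : StrictAntiOn F (Ici m))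
    (hcont : ContinuousOn F (Ici m)) (hlim : Tendsto F atTop (𝓝 l)) (hl : l < F 0) :
    ∃ x₀, 0 < x₀ ∧ F x₀ = F 0 ∧ (∀ x, 0 < x → F x = F 0 → x = x₀) ∧
      ∀ x, 0 < x → x < x₀ → F 0 < F x := by
  have rise : ∀ x, 0 < x → x ≤ m → F 0 < F x := fun x hx hxm =>
    hmono ⟨le_rfl, hm.le⟩ ⟨hx.le, hxm⟩ hx
  obtain ⟨J, hFJ, hmJ⟩ := ((hlim.eventually_lt_const hl).and (eventually_gt_atTop m)).exists
  obtain ⟨x₀, ⟨hm_le, -⟩, hFx₀⟩ :=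
    intermediate_value_Icc' hmJ.le (hcont.mono Icc_subset_Ici_self)
      ⟨hFJ.le, (rise m hm le_rfl).le⟩
  have hmx₀ : m < x₀ := hm_le.lt_of_ne fun h => (rise m hm le_rfl).ne' (h ▸ hFx₀)
  refine ⟨x₀, hm.trans hmx₀, hFx₀, fun x hx hFx => ?_, fun x hx hxx₀ => ?_⟩
  · obtain hxm | hmx := le_or_gt x m
    · exact absurd hFx (rise x hx hxm).ne'
    · exact hanti.injOn hmx.le hmx₀.le (hFx.trans hFx₀.symm)
  · obtain hxm | hmx := le_or_gt x m
    · exact rise x hx hxm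
    · exact hFx₀ ▸ hanti hmx.le hmx₀.le hxx₀

section RpowMulOneAdd

variable {θ p : ℝ}

theorem hasDerivAt_rpow_mul_one_add (hθ : 0 < θ) (x : ℝ) :
    HasDerivAt (fun x => θ ^ x * (1 + p * x)) (θ ^ x * (p + log θ * (1 + p * x))) x := by
  have := (hasStrictDerivAt_const_rpow hθ x).hasDerivAt.fun_mul
    (((hasDerivAt_id' x).const_mul p).const_add 1)
  exact this.congr_deriv (by ring)

theorem strictMonoOn_rpow_mul_one_add (hθ : 0 < θ) (hθ1 : θ < 1) (hp : 0 < p) :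
    StrictMonoOn (fun x => θ ^ x * (1 + p * x)) (Iic (-(p + log θ) / (p * log θ))) := by
  have hL : log θ < 0 := log_neg hθ hθ1
  refine strictMonoOn_of_deriv_pos (convex_Iic _)
    (fun x _ => (hasDerivAt_rpow_mul_one_add hθ x).continuousAt.continuousWithinAt) fun x hx => ?_
  rw [interior_Iic, mem_Iio, lt_div_iff_of_neg (mul_neg_of_pos_of_neg hp hL)] at hx
  rw [(hasDerivAt_rpow_mul_one_add hθ x).deriv]
  exact mul_pos (rpow_pos_of_pos hθ x) (by linarith)

theorem strictAntiOn_rpow_mul_one_add (hθ : 0 < θ) (hθ1 : θ < 1) (hp : 0 < p) :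
    StrictAntiOn (fun x => θ ^ x * (1 + p * x)) (Ici (-(p + log θ) / (p * log θ))) := by
  have hL : log θ < 0 := log_neg hθ hθ1
  refine strictAntiOn_of_deriv_neg (convex_Ici _)
    (fun x _ => (hasDerivAt_rpow_mul_one_add hθ x).continuousAt.continuousWithinAt) fun x hx => ?_
  rw [interior_Ici, mem_Ioi, div_lt_iff_of_neg (mul_neg_of_pos_of_neg hp hL)] at hx
  rw [(hasDerivAt_rpow_mul_one_add hθ x).deriv]
  exact mul_neg_of_pos_of_neg (rpow_pos_of_pos hθ x) (by linarith)

theorem tendsto_rpow_mul_one_add_atTop (hθ : 0 < θ) (hθ1 : θ < 1) :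
    Tendsto (fun x => θ ^ x * (1 + p * x)) atTop (𝓝 0) := by
  have hb : 0 < -log θ := neg_pos.mpr (log_neg hθ hθ1)
  have := (tendsto_rpow_mul_exp_neg_mul_atTop_nhds_zero 0 _ hb).add
    ((tendsto_rpow_mul_exp_neg_mul_atTop_nhds_zero 1 _ hb).const_mul p)
  rw [mul_zero, add_zero] at this
  refine this.congr fun x => ?_
  rw [rpow_zero, rpow_one, rpow_def_of_pos hθ, neg_neg, mul_comm x]
  ring

theorem exists_unique_pos_rpow_mul_one_add_eq_one (hθ : 0 < θ) (hθ1 : θ < 1) (hp : 0 < p)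
    (hpθ : 0 < p + log θ) :
    ∃ x₀, 0 < x₀ ∧ θ ^ x₀ * (1 + p * x₀) = 1 ∧
      (∀ x, 0 < x → θ ^ x * (1 + p * x) = 1 → x = x₀) ∧
      ∀ x, 0 < x → x < x₀ → 1 < θ ^ x * (1 + p * x) := by
  have hpeak : 0 < -(p + log θ) / (p * log θ) :=
    div_pos_of_neg_of_neg (neg_neg_of_pos hpθ) (mul_neg_of_pos_of_neg hp (log_neg hθ hθ1))
  simpa using exists_unique_pos_eq_of_strictMonoOn_of_strictAntiOn hpeak
    ((strictMonoOn_rpow_mul_one_add hθ hθ1 hp).mono Icc_subset_Iic_self)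
    (strictAntiOn_rpow_mul_one_add hθ hθ1 hp)
    (fun x _ => (hasDerivAt_rpow_mul_one_add hθ x).continuousAt.continuousWithinAt)
    (tendsto_rpow_mul_one_add_atTop hθ hθ1) (by simp)

end RpowMulOneAdd

theorem h2_eq_one_sub_mul (θ j : ℝ) (hθ : 0 < θ) :
    h2 θ j = (1 - θ) * (θ ^ j * (1 + (1 - θ ^ 2) / θ * j) - 1) := by
  rw [h2, rpow_add hθ, rpow_add hθ, rpow_sub hθ, rpow_two, rpow_one]
  field_simp
  ring

/-- For `1/2 < θ < 1`, `h₂` has exactly one positive real root `j₂(θ)`, and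
`h₂(j) > 0` for all `0 < j < j₂(θ)`. -/
theorem h2_unique_root (θ : ℝ) (hθ : 1 / 2 < θ) (hθ1 : θ < 1) :
    ∃ j₂ : ℝ, 0 < j₂ ∧ h2 θ j₂ = 0 ∧ (∀ j : ℝ, 0 < j → h2 θ j = 0 → j = j₂) ∧
      ∀ j : ℝ, 0 < j → j < j₂ → 0 < h2 θ j := by
  have hθ0 : 0 < θ := by linarith
  have hp : 0 < (1 - θ ^ 2) / θ := div_pos (by nlinarith) hθ0
  have hpθ : 0 < (1 - θ ^ 2) / θ + log θ := by
    have hlog := one_sub_inv_le_log_of_pos hθ0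
    have hsum : (1 - θ ^ 2) / θ + (1 - θ⁻¹) = 1 - θ := by field_simp; ring
    linarith
  have hc : 0 < 1 - θ := by linarith
  obtain ⟨j₂, hj₂, hroot, huniq, hpos⟩ := exists_unique_pos_rpow_mul_one_add_eq_one hθ0 hθ1 hp hpθ
  simp only [h2_eq_one_sub_mul θ _ hθ0, mul_eq_zero, hc.ne', false_or, sub_eq_zero, mul_pos_iff_of_pos_left hc,
    sub_pos]
  exact ⟨j₂, hj₂, hroot, huniq, hpos⟩
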